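/- Let n be a non-negative integer and d = 2^n. Let b_1, b_2, c_1, c_2, x_1 ∈ ℝ^d with (b_1; b_2) ≤ (c_1; c_2) componentwise. If (b_1 + b_2)/2 ≤ A_n x_1 ≤ (c_1 + c_2)/2 componentwise, then D_n^{-1} max(b_1 − A_n x_1, −c_2 + A_n x_1) ≤ D_n^{-1} min(c_1 − A_n x_1, −b_2 + A_n x_1) componentwise; in particular there exists x_2 ∈ ℝ^d with D_n^{-1} max(b_1 − A_n x_1, −c_2 + A_n x_1) ≤ A_n x_2 ≤ D_n^{-1} min(c_1 − A_n x_1, −b_2 + A_n x_1). -/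

import Mathlib

/-- σ(n,k) from the paper: σ(0,1)=1 and, with d = 2^n, σ(n+1,k)=σ(n,k) for 1 ≤ k ≤ d,
σ(n+1,k)=2d+1−σ(n,k−d) for d+1 ≤ k ≤ 2d. -/
def sigmaCF : ℕ → ℕ → ℤ
  | 0, _ => 1
  | n + 1, k => if k ≤ 2 ^ n then sigmaCF n k else 2 * 2 ^ n + 1 - sigmaCF n (k - 2 ^ n)

/-- ξ_{n,k} = 2 cos(π(2σ(n,k) − 1)/2^{n+1}). -/
noncomputable def xiCF (n k : ℕ) : ℝ :=
  2 * Real.cos (Real.pi * (2 * (sigmaCF n k : ℝ) - 1) / 2 ^ (n + 1))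

/-- D_n = diag(ξ_{n+1,1}, …, ξ_{n+1,2^n}). -/
noncomputable def DCF (n : ℕ) : Matrix (Fin (2 ^ n)) (Fin (2 ^ n)) ℝ :=
  Matrix.diagonal fun i => xiCF (n + 1) (i.val + 1)

/-- A_0 = (1), A_{n+1} = [[A_n, D_n A_n], [A_n, −D_n A_n]]. -/
noncomputable def ACF : (n : ℕ) → Matrix (Fin (2 ^ n)) (Fin (2 ^ n)) ℝ
  | 0 => 1
  | n + 1 =>
    Matrix.reindex (finSumFinEquiv.trans (finCongr (by rw [pow_succ, mul_two])))
      (finSumFinEquiv.trans (finCongr (by rw [pow_succ, mul_two])))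
      (Matrix.fromBlocks (ACF n) (DCF n * ACF n) (ACF n) (-(DCF n * ACF n)))

/-- Vertical concatenation (x; y) of two vectors of length 2^n. -/
def vcat {α : Type*} {n : ℕ} (x y : Fin (2 ^ n) → α) : Fin (2 ^ (n + 1)) → α :=
  fun i => Fin.append x y (finCongr (by rw [pow_succ, mul_two]) i)

/-! The four inequalities hidden in `max(b₁ − a, −c₂ + a) ≤ min(c₁ − a, −b₂ + a)` are exactly
`b₁ ≤ c₁`, `b₂ ≤ c₂` and `(b₁ + b₂)/2 ≤ a ≤ (c₁ + c₂)/2`, so the box is nonempty componentwise.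
Every `ξ_{n+1,k}` with `k ≤ 2^n` is `2 cos θ` with `0 < θ < π/2`, so `D_n⁻¹` is a positive
diagonal matrix and preserves `≤`. Finally `A_{n+1} = [[I, D_n], [I, −D_n]] · diag(A_n, A_n)`
has determinant `(−2)^{2^n} det D_n (det A_n)²`, so every `A_n` is invertible and `A_n x₂` can
be any vector of the box. -/

open Matrix

lemma max_le_min_of_le_of_midpoint_le {α : Type*} [Field α] [LinearOrder α]
    [IsStrictOrderedRing α] {b₁ b₂ c₁ c₂ a : α} (h₁ : b₁ ≤ c₁) (h₂ : b₂ ≤ c₂)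
    (hlo : (b₁ + b₂) / 2 ≤ a) (hhi : a ≤ (c₁ + c₂) / 2) :
    max (b₁ - a) (-c₂ + a) ≤ min (c₁ - a) (-b₂ + a) := by
  refine max_le (le_min ?_ ?_) (le_min ?_ ?_) <;> linarith

lemma vcat_le_vcat_iff {α : Type*} [Preorder α] {n : ℕ} {x y x' y' : Fin (2 ^ n) → α} :
    vcat x y ≤ vcat x' y' ↔ x ≤ x' ∧ y ≤ y' := by
  have he : 2 ^ (n + 1) = 2 ^ n + 2 ^ n := by rw [pow_succ, mul_two]
  have hvcat (z w : Fin (2 ^ n) → α) : vcat z w = Fin.append z w ∘ finCongr he := rfl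
  simp only [hvcat, Pi.le_def, Function.comp_apply]
  rw [(finCongr he).forall_congr_left]
  simp only [Equiv.apply_symm_apply, Fin.forall_fin_add, Fin.append_left, Fin.append_right]

lemma monotone_mulVec_inv_diagonal {ι α : Type*} [Fintype ι] [DecidableEq ι] [Field α]
    [LinearOrder α] [IsStrictOrderedRing α] {v : ι → α} (hv : ∀ i, 0 < v i) :
    Monotone (diagonal v)⁻¹.mulVec := by
  have hinv : (diagonal v)⁻¹ = diagonal v⁻¹ :=
    inv_eq_left_inv <| by
      rw [diagonal_mul_diagonal, ← diagonal_one]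
      exact congrArg diagonal (funext fun i => inv_mul_cancel₀ (hv i).ne')
  intro x y hxy i
  rw [hinv, mulVec_diagonal, mulVec_diagonal]
  exact mul_le_mul_of_nonneg_left (hxy i) (inv_nonneg.2 (hv i).le)

lemma det_fromBlocks_mul_neg {m R : Type*} [Fintype m] [DecidableEq m] [CommRing R]
    (A D : Matrix m m R) :
    (fromBlocks A (D * A) A (-(D * A))).det = (-2) ^ Fintype.card m * D.det * A.det ^ 2 := by
  have hfac : fromBlocks A (D * A) A (-(D * A)) = fromBlocks 1 D 1 (-D) * fromBlocks A 0 0 A := by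
    simp [fromBlocks_multiply]
  rw [hfac, det_mul, det_fromBlocks_one₁₁, det_fromBlocks_zero₂₁, Matrix.one_mul,
    show -D - D = (-2 : R) • D by module, det_smul]
  ring

lemma sigmaCF_mem_Icc {n k : ℕ} (hk₁ : 1 ≤ k) (hk₂ : k ≤ 2 ^ n) :
    sigmaCF n k ∈ Set.Icc 1 (2 ^ n) := by
  induction n generalizing k with
  | zero => simp [sigmaCF]
  | succ n ih =>
    by_cases h : k ≤ 2 ^ n
    · obtain ⟨hlo, hhi⟩ := ih hk₁ h
      simp only [sigmaCF, h, if_true, Set.mem_Icc]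
      omega
    · obtain ⟨hlo, hhi⟩ := ih (k := k - 2 ^ n) (by omega) (by rw [pow_succ] at hk₂; omega)
      simp only [sigmaCF, h, if_false, Set.mem_Icc]
      omega

lemma xiCF_succ_pos {n k : ℕ} (hk₁ : 1 ≤ k) (hk₂ : k ≤ 2 ^ n) : 0 < xiCF (n + 1) k := by
  obtain ⟨hlo, hhi⟩ := sigmaCF_mem_Icc hk₁ hk₂
  have hlo' : (1 : ℝ) ≤ sigmaCF n k := by exact_mod_cast hlo
  have hhi' : (sigmaCF n k : ℝ) ≤ 2 ^ n := by exact_mod_cast hhi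
  have hσ : sigmaCF (n + 1) k = sigmaCF n k := by simp [sigmaCF, hk₂]
  have hpow : (2 : ℝ) ^ (n + 1 + 1) = 4 * 2 ^ n := by ring
  rw [xiCF, hσ]
  refine mul_pos two_pos (Real.cos_pos_of_mem_Ioo ⟨?_, ?_⟩)
  · exact (neg_neg_of_pos (by positivity)).trans
      (div_pos (mul_pos Real.pi_pos (by linarith)) (by positivity))
  · rw [div_lt_iff₀ (by positivity), hpow]
    nlinarith [Real.pi_pos]

lemma monotone_DCF_inv_mulVec (n : ℕ) : Monotone (DCF n)⁻¹.mulVec :=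
  monotone_mulVec_inv_diagonal fun i => xiCF_succ_pos (by omega) i.isLt

lemma DCF_det_pos (n : ℕ) : 0 < (DCF n).det := by
  rw [DCF, det_diagonal]
  exact Finset.prod_pos fun i _ => xiCF_succ_pos (by omega) i.isLt

lemma ACF_det_ne_zero (n : ℕ) : (ACF n).det ≠ 0 := by
  induction n with
  | zero => simp [ACF]
  | succ n ih =>
    rw [ACF, det_reindex_self, det_fromBlocks_mul_neg]
    exact mul_ne_zero (mul_ne_zero (pow_ne_zero _ (by norm_num)) (DCF_det_pos n).ne')
      (pow_ne_zero _ ih)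

lemma ACF_mulVec_surjective (n : ℕ) : Function.Surjective (ACF n).mulVec :=
  mulVec_surjective_iff_isUnit.2 ((isUnit_iff_isUnit_det _).2 (ACF_det_ne_zero n).isUnit)

/-- If `(b₁; b₂) ≤ (c₁; c₂)` componentwise and `(b₁+b₂)/2 ≤ A_n x₁ ≤ (c₁+c₂)/2`
componentwise, then `D_n⁻¹ max(b₁ − A_n x₁, −c₂ + A_n x₁) ≤ D_n⁻¹ min(c₁ − A_n x₁, −b₂ + A_n x₁)`
componentwise; in particular there exists `x₂` with
`D_n⁻¹ max(b₁ − A_n x₁, −c₂ + A_n x₁) ≤ A_n x₂ ≤ D_n⁻¹ min(c₁ − A_n x₁, −b₂ + A_n x₁)`. -/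
theorem ACF_box_nonempty (n : ℕ) (b₁ b₂ c₁ c₂ x₁ : Fin (2 ^ n) → ℝ)
    (hbc : vcat b₁ b₂ ≤ vcat c₁ c₂)
    (hlo : (fun i => (b₁ i + b₂ i) / 2) ≤ (ACF n).mulVec x₁)
    (hhi : (ACF n).mulVec x₁ ≤ fun i => (c₁ i + c₂ i) / 2) :
    (DCF n)⁻¹.mulVec
        (fun i => max (b₁ i - (ACF n).mulVec x₁ i) (-c₂ i + (ACF n).mulVec x₁ i)) ≤
      (DCF n)⁻¹.mulVec
        (fun i => min (c₁ i - (ACF n).mulVec x₁ i) (-b₂ i + (ACF n).mulVec x₁ i)) ∧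
    ∃ x₂ : Fin (2 ^ n) → ℝ,
      (DCF n)⁻¹.mulVec
          (fun i => max (b₁ i - (ACF n).mulVec x₁ i) (-c₂ i + (ACF n).mulVec x₁ i)) ≤
        (ACF n).mulVec x₂ ∧
      (ACF n).mulVec x₂ ≤
        (DCF n)⁻¹.mulVec
          (fun i => min (c₁ i - (ACF n).mulVec x₁ i) (-b₂ i + (ACF n).mulVec x₁ i)) := by
  obtain ⟨hb₁, hb₂⟩ := vcat_le_vcat_iff.1 hbc
  have hbox := monotone_DCF_inv_mulVec n fun i =>
    max_le_min_of_le_of_midpoint_le (hb₁ i) (hb₂ i) (hlo i) (hhi i)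
  obtain ⟨x₂, hx₂⟩ := ACF_mulVec_surjective n
    ((DCF n)⁻¹.mulVec fun i => max (b₁ i - (ACF n).mulVec x₁ i) (-c₂ i + (ACF n).mulVec x₁ i))
  exact ⟨hbox, x₂, hx₂.ge, hx₂ ▸ hbox⟩
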